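/- arXiv:0912.1934 — 4 statements merged into one kernel-verified Lean document; each statement's English description precedes it below -/
import Mathlib

section
/- In the market with three bidders and two items where v_{1,1}=1, v_{2,1}=4, v_{2,2}=4, v_{3,2}=1, reserve prices r_{1,1}=0, r_{2,1}=r_{2,2}=2, r_{3,2}=0, all other valuations are -∞ (bidders are only interested in the listed items and the dummy item), and all maximum prices are ∞, there is no bidder optimal relaxed-stable matching: no relaxed-stable matching μ with prices p satisfies u_i ≥ u'_i for all bidders i and all relaxed-stable matchings μ' with prices p'. -/
open scoped Classical

noncomputable section

variable {I J : Type*}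

/-- Utility `u_{i,j}(p_j) = v_{i,j} - p_j` if `p_j < m_{i,j}`, and `-∞` otherwise
(valuations may themselves be `-∞`, meaning the bidder is not interested in the item). -/
def utilE (v : I → J → EReal) (m : I → J → EReal) (p : J → ℝ) (i : I) (j : J) : EReal :=
  if (p j : EReal) < m i j then v i j - (p j : EReal) else ⊥

/-- Utility of bidder `i` under matching `μ` (dummy item `j0` gives utility 0). -/
def bidderUE (v m : I → J → EReal) (j0 : J) (μ : I → J) (p : J → ℝ) (i : I) : EReal :=
  if μ i = j0 then 0 else utilE v m p i (μ i)

/-- Feasibility: `μ` is a matching (non-dummy items matched at most once), utilities are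
nonnegative, prices are nonnegative with the dummy item priced at 0, and
`r_{i,j} ≤ p_j < m_{i,j}` on matched pairs. -/
def FeasibleE (v : I → J → EReal) (r : I → J → ℝ) (m : I → J → EReal) (j0 : J)
    (μ : I → J) (p : J → ℝ) : Prop :=
  (∀ i i', μ i = μ i' → μ i ≠ j0 → i = i') ∧
  (∀ i, 0 ≤ bidderUE v m j0 μ p i) ∧
  p j0 = 0 ∧ (∀ j, 0 ≤ p j) ∧
  (∀ i, r i (μ i) ≤ p (μ i) ∧ (p (μ i) : EReal) < m i (μ i))

/-- Stability: feasibility plus `u_i ≥ u_{i,j}(p_j)` for all bidder-item pairs. -/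
def StableE (v : I → J → EReal) (r : I → J → ℝ) (m : I → J → EReal) (j0 : J)
    (μ : I → J) (p : J → ℝ) : Prop :=
  FeasibleE v r m j0 μ p ∧ ∀ i j, utilE v m p i j ≤ bidderUE v m j0 μ p i

/-- Relaxed stability (Aggarwal et al.): feasibility plus, for every pair `(i,j)`, either
`u_i ≥ v_{i,j} - max(p_j, r_{i,j})` or `p_j ≥ m_{i,j}`. -/
def RelaxedStableE (v : I → J → EReal) (r : I → J → ℝ) (m : I → J → EReal) (j0 : J)
    (μ : I → J) (p : J → ℝ) : Prop :=
  FeasibleE v r m j0 μ p ∧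
    ∀ i j, v i j - ((max (p j) (r i j) : ℝ) : EReal) ≤ bidderUE v m j0 μ p i ∨
      m i j ≤ (p j : EReal)

/-- Valuations of Example 1: `v_{1,1}=1`, `v_{2,1}=v_{2,2}=4`, `v_{3,2}=1`, valuation `0`
for the dummy item, and `-∞` otherwise. -/
def vEx1 : Fin 3 → Option (Fin 2) → EReal := fun i j =>
  if j = none then 0
  else if i = 0 ∧ j = some 0 then 1
  else if i = 1 then 4
  else if i = 2 ∧ j = some 1 then 1
  else ⊥

/-- Reserve prices of Example 1: `r_{2,1}=r_{2,2}=2`, all others `0`. -/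
def rEx1 : Fin 3 → Option (Fin 2) → ℝ := fun i j =>
  if i = 1 ∧ j ≠ none then 2 else 0

/-- Maximum prices of Example 1: all `∞`. -/
def mEx1 : Fin 3 → Option (Fin 2) → EReal := fun _ _ => ⊤

private lemma ec0 : (0:EReal) = ((0:ℝ):EReal) := rfl
private lemma ec1 : (1:EReal) = ((1:ℝ):EReal) := rfl
private lemma ec4 : (4:EReal) = ((4:ℝ):EReal) := rfl
private lemma en1 : (-1:EReal) ≤ 0 := by
  rw [show (-1:EReal) = (((-1:ℝ)):EReal) from rfl]; exact EReal.coe_nonpos.2 (by norm_num)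

def μB : Fin 3 → Option (Fin 2) := fun i => if i = 0 then some 0 else if i = 1 then some 1 else none
def pB : Option (Fin 2) → ℝ := fun j => if j = some 1 then 2 else 0
set_option maxHeartbeats 1000000 in
lemma hB : RelaxedStableE vEx1 rEx1 mEx1 none μB pB := by
  constructor
  · refine ⟨?_, ?_, ?_, ?_, ?_⟩
    · intro i i' h h'; fin_cases i <;> fin_cases i' <;> simp_all [μB]
    · intro i; fin_cases i <;> simp [bidderUE, utilE, μB, pB, vEx1, mEx1]
      all_goals simp only [ec1, ec4, ← EReal.coe_sub]
      all_goals norm_num [en1]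
    · simp [pB]
    · intro j; rcases j with _|j
      · simp [pB]
      · fin_cases j <;> simp [pB] <;> norm_num
    · intro i; fin_cases i <;> simp [μB, pB, rEx1, mEx1] <;> norm_num
  · intro i j
    left
    fin_cases i <;> rcases j with _|j <;> try fin_cases j
    all_goals simp [bidderUE, utilE, μB, pB, vEx1, rEx1, mEx1]
    all_goals simp only [ec1, ec4, ← EReal.coe_sub, ← EReal.coe_neg]
    all_goals norm_num [en1]

def μA : Fin 3 → Option (Fin 2) := fun i => if i = 0 then none else if i = 1 then some 0 else some 1
def pA : Option (Fin 2) → ℝ := fun j => if j = some 0 then 2 else 0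

set_option maxHeartbeats 1000000 in
lemma hA : RelaxedStableE vEx1 rEx1 mEx1 none μA pA := by
  constructor
  · refine ⟨?_, ?_, ?_, ?_, ?_⟩
    · intro i i' h h'; fin_cases i <;> fin_cases i' <;> simp_all [μA]
    · intro i; fin_cases i <;> simp [bidderUE, utilE, μA, pA, vEx1, mEx1]
      all_goals simp only [ec1, ec4, ← EReal.coe_sub]
      all_goals norm_num
    · simp [pA]
    · intro j; rcases j with _|j
      · simp [pA]
      · fin_cases j <;> simp [pA] <;> norm_num
    · intro i; fin_cases i <;> simp [μA, pA, rEx1, mEx1] <;> norm_num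
  · intro i j
    left
    fin_cases i <;> rcases j with _|j <;> try fin_cases j
    all_goals simp [bidderUE, utilE, μA, pA, vEx1, rEx1, mEx1]
    all_goals simp only [ec1, ec4, ← EReal.coe_sub, ← EReal.coe_neg]
    all_goals norm_num [en1]

/-- in Example 1 there is no bidder optimal relaxed-stable matching. -/
theorem example1_no_bidder_optimal_relaxed_stable :
    ¬ ∃ (μ : Fin 3 → Option (Fin 2)) (p : Option (Fin 2) → ℝ),
        RelaxedStableE vEx1 rEx1 mEx1 none μ p ∧
        ∀ μ' p', RelaxedStableE vEx1 rEx1 mEx1 none μ' p' →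
          ∀ i, bidderUE vEx1 mEx1 none μ' p' i ≤ bidderUE vEx1 mEx1 none μ p i := by
  rintro ⟨μ, p, hst, hopt⟩
  have h0 := hopt μB pB hB 0
  have h2 := hopt μA pA hA 2
  have h1 := hopt μB pB hB 1
  have hμ0 : μ 0 = some 0 := by
    rcases h : μ 0 with _|j0
    · simp [bidderUE, utilE, μB, pB, vEx1, mEx1, h] at h0
      simp only [ec0, ec1, EReal.coe_le_coe_iff] at h0; norm_num at h0
    · fin_cases j0
      · simpa using h
      · simp [bidderUE, utilE, μB, pB, vEx1, mEx1, h] at h0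
        simp only [ec1] at h0; exact absurd h0 (EReal.coe_ne_bot 1)
  have hμ2 : μ 2 = some 1 := by
    rcases h : μ 2 with _|j2
    · simp [bidderUE, utilE, μA, pA, vEx1, mEx1, h] at h2
      simp only [ec0, ec1, EReal.coe_le_coe_iff] at h2; norm_num at h2
    · fin_cases j2
      · simp [bidderUE, utilE, μA, pA, vEx1, mEx1, h] at h2
        simp only [ec1] at h2; exact absurd h2 (EReal.coe_ne_bot 1)
      · simpa using h
  rcases h : μ 1 with _|j1
  · simp [bidderUE, utilE, μB, pB, vEx1, mEx1, h] at h1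
    rw [ec4, ← EReal.coe_sub, ec0, EReal.coe_le_coe_iff] at h1; norm_num at h1
  · fin_cases j1
    · exact absurd (hst.1.1 1 0 (by rw [h, hμ0]; decide) (by rw [h]; simp)) (by decide)
    · exact absurd (hst.1.1 1 2 (by rw [h, hμ2]; decide) (by rw [h]; simp)) (by decide)
end
end

section
/- If a matching μ with prices p is stable and p_j ≤ p'_j for all items j and all stable matchings μ' with prices p', then μ with p is bidder optimal: u_i ≥ u'_i for all bidders i and all stable matchings μ' with prices p'. -/
open scoped Classical

noncomputable section

variable {I J : Type*}

/-- Utility `u_{i,j}(p_j) = v_{i,j} - p_j` if `p_j < m_{i,j}`, and `-∞` otherwise. -/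
def util (v : I → J → ℝ) (m : I → J → EReal) (p : J → ℝ) (i : I) (j : J) : EReal :=
  if (p j : EReal) < m i j then ((v i j - p j : ℝ) : EReal) else ⊥

/-- Utility of bidder `i` under matching `μ` (dummy item `j0` gives utility 0). -/
def bidderU (v : I → J → ℝ) (m : I → J → EReal) (j0 : J) (μ : I → J) (p : J → ℝ)
    (i : I) : EReal :=
  if μ i = j0 then 0 else util v m p i (μ i)

/-- Feasibility: `μ` is a matching (non-dummy items matched at most once), utilities are
nonnegative, prices are nonnegative with the dummy item priced at 0, and
`r_{i,j} ≤ p_j < m_{i,j}` on matched pairs. -/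
def Feasible (v r : I → J → ℝ) (m : I → J → EReal) (j0 : J) (μ : I → J) (p : J → ℝ) : Prop :=
  (∀ i i', μ i = μ i' → μ i ≠ j0 → i = i') ∧
  (∀ i, 0 ≤ bidderU v m j0 μ p i) ∧
  p j0 = 0 ∧ (∀ j, 0 ≤ p j) ∧
  (∀ i, r i (μ i) ≤ p (μ i) ∧ (p (μ i) : EReal) < m i (μ i))

/-- Stability: feasibility plus `u_i ≥ u_{i,j}(p_j)` for all bidder-item pairs. -/
def Stable (v r : I → J → ℝ) (m : I → J → EReal) (j0 : J) (μ : I → J) (p : J → ℝ) : Prop :=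
  Feasible v r m j0 μ p ∧ ∀ i j, util v m p i j ≤ bidderU v m j0 μ p i

/-- Bidder optimality: stable, and every bidder weakly prefers it to every stable matching. -/
def BidderOptimal (v r : I → J → ℝ) (m : I → J → EReal) (j0 : J) (μ : I → J) (p : J → ℝ) :
    Prop :=
  Stable v r m j0 μ p ∧
    ∀ μ' p', Stable v r m j0 μ' p' → ∀ i, bidderU v m j0 μ' p' i ≤ bidderU v m j0 μ p i

/-- a stable matching with componentwise-minimal prices is bidder optimal. -/
theorem minimal_prices_implies_bidder_optimal (v r : I → J → ℝ) (m : I → J → EReal)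
    (j0 : J) (μ : I → J) (p : J → ℝ)
    (hstab : Stable v r m j0 μ p)
    (hmin : ∀ μ' p', Stable v r m j0 μ' p' → ∀ j, p j ≤ p' j) :
    ∀ μ' p', Stable v r m j0 μ' p' → ∀ i, bidderU v m j0 μ' p' i ≤ bidderU v m j0 μ p i := by
  intro μ' p' hstab' i
  have hple := hmin μ' p' hstab'
  unfold bidderU
  by_cases h0 : μ' i = j0
  · simp only [h0, if_pos rfl]
    exact hstab.1.2.1 i
  · simp only [if_neg h0]
    have hm' : (p' (μ' i) : EReal) < m i (μ' i) := (hstab'.1.2.2.2.2 i).2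
    have hm : (p (μ' i) : EReal) < m i (μ' i) :=
      lt_of_le_of_lt (by exact_mod_cast hple (μ' i)) hm'
    have h1 : util v m p' i (μ' i) ≤ util v m p i (μ' i) := by
      unfold util
      rw [if_pos hm', if_pos hm]
      exact_mod_cast sub_le_sub_left (hple (μ' i)) _
    exact h1.trans (hstab.2 i (μ' i))
end
end

section
/- Let c_i > 0 for each bidder and c_j > 0 for each item. A matching μ̂ with prices p̂ is bidder optimal for data (v̂_{i,j}, r̂_{i,j}, m̂_{i,j}) and utilities u_{i,j}(p_j) = v̂_{i,j} - c_i·c_j·p_j (for p_j < m̂_{i,j}, -∞ otherwise) if and only if the matching μ = μ̂ with prices p_j = c_j·p̂_j is bidder optimal for data (v̂_{i,j}/c_i, c_j·r̂_{i,j}, c_j·m̂_{i,j}) and standard utilities u_{i,j}(p_j) = v_{i,j} - p_j (for p_j < m_{i,j}, -∞ otherwise). -/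
/-!
Multiplying bidder `i`'s utilities by `c_i > 0` is an order isomorphism of `EReal` fixing `0`,
and multiplying item `j`'s price, reserve and maximum price by `c_j > 0` is a bijection on price
vectors that preserves every constraint. Hence feasibility, stability and bidder optimality are
invariant under this rescaling, and the generalized utility `v̂ - c_i c_j p̂` is exactly `c_i`
times the standard utility `v̂ / c_i - p` of the rescaled data at the rescaled prices.
-/

open scoped Classical

noncomputable section

variable {I J : Type*}

/-- Generalized utility `u_{i,j}(p_j) = v_{i,j} - c_i · c_j · p_j` if `p_j < m_{i,j}`, and
`-∞` otherwise. Standard utilities correspond to `c_i = c_j = 1`. -/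
def gutil (v : I → J → ℝ) (m : I → J → EReal) (ci : I → ℝ) (cj : J → ℝ) (p : J → ℝ)
    (i : I) (j : J) : EReal :=
  if (p j : EReal) < m i j then ((v i j - ci i * cj j * p j : ℝ) : EReal) else ⊥

/-- Utility of bidder `i` under matching `μ` (dummy item `j0` gives utility 0), for an
abstract utility function `utilF`. -/
def gbidderU (utilF : (J → ℝ) → I → J → EReal) (j0 : J) (μ : I → J) (p : J → ℝ)
    (i : I) : EReal :=
  if μ i = j0 then 0 else utilF p i (μ i)

/-- Feasibility for an abstract utility function: `μ` is a matching, utilities are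
nonnegative, prices are nonnegative with the dummy item priced at `0`, and
`r_{i,j} ≤ p_j < m_{i,j}` on matched pairs. -/
def GFeasible (utilF : (J → ℝ) → I → J → EReal) (r : I → J → ℝ) (m : I → J → EReal)
    (j0 : J) (μ : I → J) (p : J → ℝ) : Prop :=
  (∀ i i', μ i = μ i' → μ i ≠ j0 → i = i') ∧
  (∀ i, 0 ≤ gbidderU utilF j0 μ p i) ∧
  p j0 = 0 ∧ (∀ j, 0 ≤ p j) ∧
  (∀ i, r i (μ i) ≤ p (μ i) ∧ (p (μ i) : EReal) < m i (μ i))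

/-- Stability: feasibility plus `u_i ≥ u_{i,j}(p_j)` for all bidder-item pairs. -/
def GStable (utilF : (J → ℝ) → I → J → EReal) (r : I → J → ℝ) (m : I → J → EReal)
    (j0 : J) (μ : I → J) (p : J → ℝ) : Prop :=
  GFeasible utilF r m j0 μ p ∧ ∀ i j, utilF p i j ≤ gbidderU utilF j0 μ p i

/-- Bidder optimality: stable, and every bidder weakly prefers it to every stable
matching. -/
def GBidderOptimal (utilF : (J → ℝ) → I → J → EReal) (r : I → J → ℝ)
    (m : I → J → EReal) (j0 : J) (μ : I → J) (p : J → ℝ) : Prop :=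
  GStable utilF r m j0 μ p ∧
    ∀ μ' p', GStable utilF r m j0 μ' p' →
      ∀ i, gbidderU utilF j0 μ' p' i ≤ gbidderU utilF j0 μ p i

theorem EReal.strictMono_coe_mul_left {c : ℝ} (hc : 0 < c) :
    StrictMono fun x : EReal => (c : EReal) * x := by
  have h : (fun x : EReal => (c : EReal) * x) = fun x => x / ((c⁻¹ : ℝ) : EReal) := by
    funext x
    rw [div_eq_mul_inv, ← EReal.coe_inv, _root_.inv_inv, mul_comm]
  rw [h]
  exact EReal.strictMono_div_right_of_pos (EReal.coe_pos.2 (inv_pos.2 hc)) (EReal.coe_ne_top _)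

theorem EReal.coe_mul_nonneg_iff {c : ℝ} (hc : 0 < c) {x : EReal} :
    0 ≤ (c : EReal) * x ↔ 0 ≤ x := by
  simpa only [mul_zero] using (EReal.strictMono_coe_mul_left hc).le_iff_le (a := 0) (b := x)

section Rescaling

variable {U U' : (J → ℝ) → I → J → EReal} {r : I → J → ℝ} {m : I → J → EReal}
  {ci : I → ℝ} {cj : J → ℝ} {j0 : J} {μ : I → J}

theorem gbidderU_eq_mul (hU : ∀ p i j, U p i j = ci i * U' (fun j => cj j * p j) i j)
    (p : J → ℝ) (i : I) :
    gbidderU U j0 μ p i = ci i * gbidderU U' j0 μ (fun j => cj j * p j) i := by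
  unfold gbidderU
  split_ifs
  · rw [mul_zero]
  · exact hU p i (μ i)

theorem gfeasible_iff_rescale (hci : ∀ i, 0 < ci i) (hcj : ∀ j, 0 < cj j)
    (hU : ∀ p i j, U p i j = ci i * U' (fun j => cj j * p j) i j) (p : J → ℝ) :
    GFeasible U r m j0 μ p ↔
      GFeasible U' (fun i j => cj j * r i j) (fun i j => (cj j : EReal) * m i j) j0 μ
        (fun j => cj j * p j) := by
  unfold GFeasible
  simp only [gbidderU_eq_mul hU, EReal.coe_mul_nonneg_iff (hci _), mul_eq_zero,
    (hcj j0).ne', false_or, mul_nonneg_iff_of_pos_left (hcj _),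
    mul_le_mul_iff_right₀ (hcj _), EReal.coe_mul,
    (EReal.strictMono_coe_mul_left (hcj _)).lt_iff_lt]

theorem gstable_iff_rescale (hci : ∀ i, 0 < ci i) (hcj : ∀ j, 0 < cj j)
    (hU : ∀ p i j, U p i j = ci i * U' (fun j => cj j * p j) i j) (p : J → ℝ) :
    GStable U r m j0 μ p ↔
      GStable U' (fun i j => cj j * r i j) (fun i j => (cj j : EReal) * m i j) j0 μ
        (fun j => cj j * p j) := by
  unfold GStable
  simp only [gfeasible_iff_rescale hci hcj hU, hU p, gbidderU_eq_mul hU,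
    (EReal.strictMono_coe_mul_left (hci _)).le_iff_le]

theorem gbidderOptimal_iff_rescale (hci : ∀ i, 0 < ci i) (hcj : ∀ j, 0 < cj j)
    (hU : ∀ p i j, U p i j = ci i * U' (fun j => cj j * p j) i j) (p : J → ℝ) :
    GBidderOptimal U r m j0 μ p ↔
      GBidderOptimal U' (fun i j => cj j * r i j) (fun i j => (cj j : EReal) * m i j) j0 μ
        (fun j => cj j * p j) := by
  have hscale : Function.Surjective fun (p : J → ℝ) j => cj j * p j := fun p' =>
    ⟨fun j => p' j / cj j, funext fun j => mul_div_cancel₀ _ (hcj j).ne'⟩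
  unfold GBidderOptimal
  simp only [gstable_iff_rescale hci hcj hU, gbidderU_eq_mul hU,
    (EReal.strictMono_coe_mul_left (hci _)).le_iff_le]
  refine and_congr_right fun _ => forall_congr' fun _ => ⟨fun h p' => ?_, fun h p' => h _⟩
  obtain ⟨p', rfl⟩ := hscale p'
  exact h p'

end Rescaling

theorem gutil_eq_mul_gutil_rescaled (vh : I → J → ℝ) (mh : I → J → EReal)
    {ci : I → ℝ} {cj : J → ℝ} (hci : ∀ i, 0 < ci i) (hcj : ∀ j, 0 < cj j)
    (p : J → ℝ) (i : I) (j : J) :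
    gutil vh mh ci cj p i j =
      ci i * gutil (fun i j => vh i j / ci i) (fun i j => (cj j : EReal) * mh i j)
        (fun _ => 1) (fun _ => 1) (fun j => cj j * p j) i j := by
  unfold gutil
  simp only [EReal.coe_mul, (EReal.strictMono_coe_mul_left (hcj j)).lt_iff_lt]
  split_ifs
  · rw [← EReal.coe_mul, EReal.coe_eq_coe_iff]
    field_simp [(hci i).ne']
  · rw [EReal.coe_mul_bot_of_pos (hci i)]

/-- `μ̂` with prices `p̂` is bidder optimal for `(v̂, r̂, m̂)` under generalized
utilities `v̂_{i,j} - c_i c_j p_j` iff `μ = μ̂` with prices `p_j = c_j p̂_j` is bidder optimal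
for `(v̂_{i,j}/c_i, c_j r̂_{i,j}, c_j m̂_{i,j})` under standard utilities. -/
theorem bidder_optimal_transform (vh rh : I → J → ℝ) (mh : I → J → EReal)
    (ci : I → ℝ) (cj : J → ℝ) (hci : ∀ i, 0 < ci i) (hcj : ∀ j, 0 < cj j)
    (j0 : J) (μ : I → J) (ph : J → ℝ) :
    GBidderOptimal (gutil vh mh ci cj) rh mh j0 μ ph ↔
      GBidderOptimal
        (gutil (fun i j => vh i j / ci i) (fun i j => (cj j : EReal) * mh i j)
          (fun _ => 1) (fun _ => 1))
        (fun i j => cj j * rh i j) (fun i j => (cj j : EReal) * mh i j)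
        j0 μ (fun j => cj j * ph j) :=
  gbidderOptimal_iff_rescale hci hcj (gutil_eq_mul_gutil_rescaled vh mh hci hcj) ph
end
end

section
/- In the instance of the truthfulness example, bidder optimal utilities can strictly increase when a bidder misreports a single valuation; consequently, no mechanism that always outputs a bidder optimal stable matching and prices (with respect to reported valuations) is truthful, even when all reserve prices are 0, maximum prices depend only on the bidder (m_{i,j} = m_i) and are pairwise distinct. -/
open scoped Classical

noncomputable section

variable {I J : Type*}

/-- Maximum prices that depend only on the bidder: `m_{i,j} = m_i` on real items, `∞` on
the dummy item. -/
def mOf (n k : ℕ) (mb : Fin n → ℝ) : Fin n → Option (Fin k) → EReal :=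
  fun i j => if j = none then ⊤ else (mb i : EReal)

/-!
Bidder-optimal outcomes carry the componentwise least stable prices, because a stable outcome
gives every bidder at least her payoff in any feasible outcome with higher prices. In the
instance (three bidders with maximum prices `3, 2, 9`, three items) every stable price vector
for the true valuations is at least `(3, 1, 2)`: at any lower price two bidders whose caps
allow it would have to hold the same item. These prices, with bidder `2` buying item `0`, are
stable, so bidder `0` gets nothing. Raising her value of item `1` from `1` to `8` lowers the
least stable prices to `(1, 0, 0)`, and she must then receive item `1` for free, which she
truly values at `1`.
-/

def payoff (v : I → J → ℝ) (μ : I → J) (p : J → ℝ) (i : I) : ℝ :=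
  v i (μ i) - p (μ i)

section General

variable {v r : I → J → ℝ} {m : I → J → EReal} {j0 : J} {μ : I → J} {p : J → ℝ} {i : I}

theorem bidderU_eq_payoff (hv : v i j0 = 0) (hp : p j0 = 0)
    (hm : (p (μ i) : EReal) < m i (μ i)) : bidderU v m j0 μ p i = payoff v μ p i := by
  by_cases hμ : μ i = j0
  · simp [bidderU, payoff, hμ, hv, hp]
  · simp [bidderU, payoff, util, hμ, hm]

theorem Feasible.price_dummy (h : Feasible v r m j0 μ p) : p j0 = 0 :=
  h.2.2.1

theorem Feasible.price_nonneg (h : Feasible v r m j0 μ p) (j : J) : 0 ≤ p j :=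
  h.2.2.2.1 j

theorem Feasible.price_lt_max (h : Feasible v r m j0 μ p) (i : I) :
    (p (μ i) : EReal) < m i (μ i) :=
  (h.2.2.2.2 i).2

theorem Feasible.bidderU_eq_payoff (h : Feasible v r m j0 μ p) (hv : v i j0 = 0) :
    bidderU v m j0 μ p i = payoff v μ p i :=
  _root_.bidderU_eq_payoff hv h.price_dummy (h.price_lt_max i)

theorem Stable.le_payoff (h : Stable v r m j0 μ p) (hv : v i j0 = 0) {j : J}
    (hj : (p j : EReal) < m i j) : v i j - p j ≤ payoff v μ p i := by
  have := h.2 i j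
  rwa [util, if_pos hj, h.1.bidderU_eq_payoff hv, EReal.coe_le_coe_iff] at this

/-- The item bidder `i` holds under `μ` stays affordable at the lower prices `p₀`. -/
theorem Stable.payoff_le_of_price_le {μ₀ : I → J} {p₀ : J → ℝ} (h₀ : Stable v r m j0 μ₀ p₀)
    (h : Feasible v r m j0 μ p) (hv : v i j0 = 0) (hp : ∀ j, p₀ j ≤ p j) :
    payoff v μ p i ≤ payoff v μ₀ p₀ i := by
  have hm : (p₀ (μ i) : EReal) < m i (μ i) :=
    (EReal.coe_le_coe_iff.2 (hp (μ i))).trans_lt (h.price_lt_max i)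
  calc payoff v μ p i ≤ v i (μ i) - p₀ (μ i) := by unfold payoff; linarith [hp (μ i)]
    _ ≤ payoff v μ₀ p₀ i := h₀.le_payoff hv hm

theorem BidderOptimal.payoff_le (h : BidderOptimal v r m j0 μ p) (hv : v i j0 = 0)
    {μ' : I → J} {p' : J → ℝ} (h' : Stable v r m j0 μ' p') :
    payoff v μ' p' i ≤ payoff v μ p i := by
  have := h.2 μ' p' h' i
  rwa [h.1.1.bidderU_eq_payoff hv, h'.1.bidderU_eq_payoff hv, EReal.coe_le_coe_iff] at this

theorem bidderOptimal_of_price_le (h : Stable v r m j0 μ p) (hv : ∀ i, v i j0 = 0)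
    (hp : ∀ μ' p', Stable v r m j0 μ' p' → ∀ j, p j ≤ p' j) :
    BidderOptimal v r m j0 μ p := by
  refine ⟨h, fun μ' p' h' i => ?_⟩
  rw [h.1.bidderU_eq_payoff (hv i), h'.1.bidderU_eq_payoff (hv i), EReal.coe_le_coe_iff]
  exact h.payoff_le_of_price_le h'.1 (hv i) (hp μ' p' h')

theorem stable_of_payoff (hμ : ∀ i i', μ i = μ i' → μ i ≠ j0 → i = i') (hp0 : p j0 = 0)
    (hp : ∀ j, 0 ≤ p j) (hr : ∀ i, r i (μ i) ≤ p (μ i))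
    (hm : ∀ i, (p (μ i) : EReal) < m i (μ i)) (hv : ∀ i, v i j0 = 0)
    (hnn : ∀ i, 0 ≤ payoff v μ p i)
    (henvy : ∀ i j, (p j : EReal) < m i j → v i j - p j ≤ payoff v μ p i) :
    Stable v r m j0 μ p := by
  have hU : ∀ i, bidderU v m j0 μ p i = payoff v μ p i :=
    fun i => bidderU_eq_payoff (hv i) hp0 (hm i)
  refine ⟨⟨hμ, fun i => ?_, hp0, hp, fun i => ⟨hr i, hm i⟩⟩, fun i j => ?_⟩
  · rw [hU, EReal.coe_nonneg]
    exact hnn i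
  · unfold util
    split_ifs with hj
    · rw [hU, EReal.coe_le_coe_iff]
      exact henvy i j hj
    · exact bot_le

end General

section MaxPricePerBidder

variable {n k : ℕ} {mb : Fin n → ℝ} {i : Fin n}

@[simp] theorem coe_lt_mOf_none (x : ℝ) : (x : EReal) < mOf n k mb i none := by
  simp [mOf]

@[simp] theorem coe_lt_mOf_some (x : ℝ) (j : Fin k) :
    (x : EReal) < mOf n k mb i (some j) ↔ x < mb i := by
  simp [mOf]

end MaxPricePerBidder

namespace TruthfulnessExample

theorem fin_three_cases (j : Fin 3) : j = 0 ∨ j = 1 ∨ j = 2 := by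
  omega

def maxPrice : Fin 3 → ℝ
  | 0 => 3 | 1 => 2 | 2 => 9

/-- Bidder `0` values item `1` at `x`: truthfully `x = 1`, in her misreport `x = 8`. -/
def valuation (x : ℝ) : Fin 3 → Option (Fin 3) → ℝ
  | _, none => 0
  | 0, some 0 => 5 | 0, some 1 => x | 0, some 2 => 2
  | 1, some 0 => 8 | 1, some 1 => 1 | 1, some 2 => 7
  | 2, some 0 => 8 | 2, some 1 => 4 | 2, some 2 => 7

abbrev IsStable (x : ℝ) (μ : Fin 3 → Option (Fin 3)) (p : Option (Fin 3) → ℝ) : Prop :=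
  Stable (valuation x) (fun _ _ => 0) (mOf 3 3 maxPrice) none μ p

abbrev IsBidderOptimal (x : ℝ) (μ : Fin 3 → Option (Fin 3)) (p : Option (Fin 3) → ℝ) : Prop :=
  BidderOptimal (valuation x) (fun _ _ => 0) (mOf 3 3 maxPrice) none μ p

theorem maxPrice_injective : Function.Injective maxPrice := by
  intro a b hab
  obtain rfl | rfl | rfl := fin_three_cases a <;> obtain rfl | rfl | rfl := fin_three_cases b <;>
    first | rfl | norm_num [maxPrice] at hab

theorem valuation_eq_of_ne (x y : ℝ) {i : Fin 3} {j : Option (Fin 3)} (h : (i, j) ≠ (0, some 1)) :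
    valuation x i j = valuation y i j := by
  rcases j with _ | j
  · rfl
  obtain rfl | rfl | rfl := fin_three_cases i <;> obtain rfl | rfl | rfl := fin_three_cases j <;>
    first | rfl | exact absurd rfl h

section Stable

variable {x : ℝ} {μ : Fin 3 → Option (Fin 3)} {p : Option (Fin 3) → ℝ}

theorem IsStable.price_nonneg (h : IsStable x μ p) (j : Option (Fin 3)) : 0 ≤ p j :=
  h.1.price_nonneg j

theorem IsStable.price_lt (h : IsStable x μ p) {i j : Fin 3} (hμ : μ i = some j) :
    p (some j) < maxPrice i := by
  simpa [hμ] using h.1.price_lt_max i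

theorem IsStable.ne_of_eq_some (h : IsStable x μ p) {i i' j : Fin 3} (hi : i ≠ i')
    (hμ : μ i = some j) : μ i' ≠ some j :=
  fun hμ' => hi (h.1.1 i i' (hμ.trans hμ'.symm) (by simp [hμ]))

theorem IsStable.le_payoff (h : IsStable x μ p) {i j : Fin 3} (hj : p (some j) < maxPrice i) :
    valuation x i (some j) - p (some j) ≤ payoff (valuation x) μ p i :=
  Stable.le_payoff h rfl (by simpa using hj)

theorem isStable_of (hμ : ∀ i i', μ i = μ i' → μ i ≠ none → i = i') (hp0 : p none = 0)
    (hp : ∀ j, 0 ≤ p (some j)) (hm : ∀ i j, μ i = some j → p (some j) < maxPrice i)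
    (hnn : ∀ i, 0 ≤ payoff (valuation x) μ p i)
    (henvy : ∀ i j, p (some j) < maxPrice i →
      valuation x i (some j) - p (some j) ≤ payoff (valuation x) μ p i) :
    IsStable x μ p := by
  have hp' : ∀ j, 0 ≤ p j := by
    rintro (_ | j)
    exacts [hp0.ge, hp j]
  refine stable_of_payoff hμ hp0 hp' (fun i => hp' _) (fun i => ?_) (fun _ => rfl) hnn ?_
  · rcases hμi : μ i with _ | j
    · exact coe_lt_mOf_none _
    · exact (coe_lt_mOf_some _ _).2 (hm i j hμi)
  · rintro i (_ | j) hj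
    · simpa [valuation, hp0] using hnn i
    · exact henvy i j ((coe_lt_mOf_some _ _).1 hj)

theorem IsStable.exists_of_lt_payoff (h : IsStable x μ p) {i : Fin 3} {c : ℝ} (hc0 : 0 ≤ c)
    (hc : c < payoff (valuation x) μ p i) :
    ∃ j, μ i = some j ∧ p (some j) < maxPrice i ∧ c < valuation x i (some j) - p (some j) := by
  rcases hμ : μ i with _ | j
  · simp [payoff, hμ, valuation, h.1.price_dummy] at hc
    linarith
  · exact ⟨j, rfl, h.price_lt hμ, by simpa [payoff, hμ] using hc⟩

end Stable

namespace Honest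

variable {μ : Fin 3 → Option (Fin 3)} {p : Option (Fin 3) → ℝ}

/-- Below price `3` for item `0`, bidders `0` and `2` would both need item `0`, or else bidder `1`
would compete with bidder `2` for item `2`. -/
theorem three_le_price_zero (h : IsStable 1 μ p) : 3 ≤ p (some 0) := by
  by_contra! hA
  have hp := h.price_nonneg
  have hu0 := h.le_payoff (i := 0) (j := 0) (by norm_num [maxPrice]; linarith)
  have hu2 := h.le_payoff (i := 2) (j := 0) (by norm_num [maxPrice]; linarith)
  norm_num [valuation] at hu0 hu2
  have hμ0 : μ 0 = some 0 := by
    obtain ⟨j, hμ, -, hj⟩ := h.exists_of_lt_payoff (i := 0) (c := 2) (by norm_num) (by linarith)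
    obtain rfl | rfl | rfl := fin_three_cases j
    · exact hμ
    · norm_num [valuation] at hj; linarith [hp (some 1)]
    · norm_num [valuation] at hj; linarith [hp (some 2)]
  obtain ⟨j, hμ2, -, hj⟩ := h.exists_of_lt_payoff (i := 2) (c := 5) (by norm_num) (by linarith)
  obtain rfl | rfl | rfl := fin_three_cases j
  · exact h.ne_of_eq_some (i' := 2) (by decide) hμ0 hμ2
  · norm_num [valuation] at hj; linarith [hp (some 1)]
  norm_num [valuation] at hj
  have hu1 := h.le_payoff (i := 1) (j := 2) (by norm_num [maxPrice]; linarith)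
  norm_num [valuation] at hu1
  obtain ⟨j, hμ1, -, hj⟩ := h.exists_of_lt_payoff (i := 1) (c := 5) (by norm_num) (by linarith)
  obtain rfl | rfl | rfl := fin_three_cases j
  · exact h.ne_of_eq_some (i' := 1) (by decide) hμ0 hμ1
  · norm_num [valuation] at hj; linarith [hp (some 1)]
  · exact h.ne_of_eq_some (i' := 1) (by decide) hμ2 hμ1

theorem two_le_price_two (h : IsStable 1 μ p) : 2 ≤ p (some 2) := by
  by_contra! hC
  have hp := h.price_nonneg
  have hA := three_le_price_zero h
  have hu1 := h.le_payoff (i := 1) (j := 2) (by norm_num [maxPrice]; linarith)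
  have hu2 := h.le_payoff (i := 2) (j := 2) (by norm_num [maxPrice]; linarith)
  norm_num [valuation] at hu1 hu2
  have hμ1 : μ 1 = some 2 := by
    obtain ⟨j, hμ, hm, hj⟩ := h.exists_of_lt_payoff (i := 1) (c := 5) (by norm_num) (by linarith)
    obtain rfl | rfl | rfl := fin_three_cases j
    · norm_num [maxPrice] at hm; linarith
    · norm_num [valuation] at hj; linarith [hp (some 1)]
    · exact hμ
  obtain ⟨j, hμ2, -, hj⟩ := h.exists_of_lt_payoff (i := 2) (c := 5) (by norm_num) (by linarith)
  obtain rfl | rfl | rfl := fin_three_cases j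
  · norm_num [valuation] at hj; linarith
  · norm_num [valuation] at hj; linarith [hp (some 1)]
  · exact h.ne_of_eq_some (i' := 2) (by decide) hμ1 hμ2

theorem one_le_price_one (h : IsStable 1 μ p) : 1 ≤ p (some 1) := by
  by_contra! hB
  have hA := three_le_price_zero h
  have hC := two_le_price_two h
  have hu0 := h.le_payoff (i := 0) (j := 1) (by norm_num [maxPrice]; linarith)
  have hu1 := h.le_payoff (i := 1) (j := 1) (by norm_num [maxPrice]; linarith)
  norm_num [valuation] at hu0 hu1
  have hμ1 : μ 1 = some 1 := by
    obtain ⟨j, hμ, hm, -⟩ := h.exists_of_lt_payoff (i := 1) (c := 0) le_rfl (by linarith)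
    obtain rfl | rfl | rfl := fin_three_cases j
    · norm_num [maxPrice] at hm; linarith
    · exact hμ
    · norm_num [maxPrice] at hm; linarith
  obtain ⟨j, hμ0, hm, hj⟩ := h.exists_of_lt_payoff (i := 0) (c := 0) le_rfl (by linarith)
  obtain rfl | rfl | rfl := fin_three_cases j
  · norm_num [maxPrice] at hm; linarith
  · exact h.ne_of_eq_some (i' := 0) (by decide) hμ1 hμ0
  · norm_num [valuation] at hj; linarith

def matching : Fin 3 → Option (Fin 3)
  | 0 => none | 1 => none | 2 => some 0

def price : Option (Fin 3) → ℝ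
  | some 0 => 3 | some 1 => 1 | some 2 => 2 | none => 0

theorem price_le (h : IsStable 1 μ p) : ∀ j, price j ≤ p j
  | none => by simp [price, h.1.price_dummy]
  | some 0 => three_le_price_zero h
  | some 1 => one_le_price_one h
  | some 2 => two_le_price_two h

theorem isStable : IsStable 1 matching price := by
  refine isStable_of (by decide) rfl ?_ ?_ ?_ ?_ <;>
    simp [Fin.forall_fin_succ, matching, price, payoff, valuation, maxPrice]
  all_goals norm_num

theorem isBidderOptimal : IsBidderOptimal 1 matching price :=
  bidderOptimal_of_price_le isStable (fun _ => rfl) fun _ _ h => price_le h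

theorem payoff_zero_nonpos (h : IsStable 1 μ p) : payoff (valuation 1) μ p 0 ≤ 0 :=
  (isStable.payoff_le_of_price_le h.1 rfl (price_le h)).trans
    (by norm_num [payoff, matching, price, valuation])

end Honest

namespace Misreport

variable {μ : Fin 3 → Option (Fin 3)} {p : Option (Fin 3) → ℝ}

theorem one_le_price_zero (h : IsStable 8 μ p) : 1 ≤ p (some 0) := by
  by_contra! hA
  have hp := h.price_nonneg
  have hu1 := h.le_payoff (i := 1) (j := 0) (by norm_num [maxPrice]; linarith)
  have hu2 := h.le_payoff (i := 2) (j := 0) (by norm_num [maxPrice]; linarith)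
  norm_num [valuation] at hu1 hu2
  have hμ1 : μ 1 = some 0 := by
    obtain ⟨j, hμ, -, hj⟩ := h.exists_of_lt_payoff (i := 1) (c := 7) (by norm_num) (by linarith)
    obtain rfl | rfl | rfl := fin_three_cases j
    · exact hμ
    · norm_num [valuation] at hj; linarith [hp (some 1)]
    · norm_num [valuation] at hj; linarith [hp (some 2)]
  obtain ⟨j, hμ2, -, hj⟩ := h.exists_of_lt_payoff (i := 2) (c := 7) (by norm_num) (by linarith)
  obtain rfl | rfl | rfl := fin_three_cases j
  · exact h.ne_of_eq_some (i' := 2) (by decide) hμ1 hμ2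
  · norm_num [valuation] at hj; linarith [hp (some 1)]
  · norm_num [valuation] at hj; linarith [hp (some 2)]

def matching : Fin 3 → Option (Fin 3)
  | 0 => some 1 | 1 => some 0 | 2 => some 2

def price : Option (Fin 3) → ℝ
  | none => 0 | some 0 => 1 | some 1 => 0 | some 2 => 0

theorem price_le (h : IsStable 8 μ p) : ∀ j, price j ≤ p j
  | some 0 => one_le_price_zero h
  | none | some 1 | some 2 => by simpa [price] using h.price_nonneg _

theorem isStable : IsStable 8 matching price := by
  refine isStable_of (by decide) rfl ?_ ?_ ?_ ?_ <;>
    simp [Fin.forall_fin_succ, matching, price, payoff, valuation, maxPrice]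
  all_goals norm_num

theorem isBidderOptimal : IsBidderOptimal 8 matching price :=
  bidderOptimal_of_price_le isStable (fun _ => rfl) fun _ _ h => price_le h

/-- Bidder `0` secures her reported value `8` only by getting item `1` for free, which she
truly values at `1`. -/
theorem one_le_honest_payoff (h : IsBidderOptimal 8 μ p) : 1 ≤ payoff (valuation 1) μ p 0 := by
  have h8 : 8 ≤ payoff (valuation 8) μ p 0 := by
    simpa [payoff, matching, price, valuation] using h.payoff_le (i := 0) rfl isStable
  have hs : IsStable 8 μ p := h.1
  have hp := hs.price_nonneg
  obtain ⟨j, hμ, -, hj⟩ := hs.exists_of_lt_payoff (i := 0) (c := 7) (by norm_num) (by linarith)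
  obtain rfl | rfl | rfl := fin_three_cases j
  · norm_num [valuation] at hj; linarith [hp (some 0)]
  · simp only [payoff, hμ, valuation] at h8 ⊢
    linarith
  · norm_num [valuation] at hj; linarith [hp (some 2)]

end Misreport

end TruthfulnessExample

open TruthfulnessExample

/-- there is an instance with zero reserve prices and pairwise distinct,
bidder-dependent maximum prices in which bidder optimal stable matchings exist for the true
and for some falsified valuations (differing in a single entry), and the misreporting
bidder's true utility is strictly larger under every bidder optimal outcome for the
falsified valuations than under every bidder optimal outcome for the true valuations.
Hence no mechanism computing bidder optimal outcomes is truthful. -/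
theorem bidder_optimal_not_truthful :
    ∃ (n k : ℕ) (v v' : Fin n → Option (Fin k) → ℝ) (mb : Fin n → ℝ)
      (i₀ : Fin n) (j₀ : Fin k),
      Function.Injective mb ∧
      (∀ i, v i none = 0 ∧ v' i none = 0) ∧
      (∀ i j, (i, j) ≠ (i₀, some j₀) → v' i j = v i j) ∧
      (∃ μ p, BidderOptimal v (fun _ _ => 0) (mOf n k mb) none μ p) ∧
      (∃ μ' p', BidderOptimal v' (fun _ _ => 0) (mOf n k mb) none μ' p') ∧
      (∀ μ p μ' p',
        BidderOptimal v (fun _ _ => 0) (mOf n k mb) none μ p →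
        BidderOptimal v' (fun _ _ => 0) (mOf n k mb) none μ' p' →
        bidderU v (mOf n k mb) none μ p i₀ < bidderU v (mOf n k mb) none μ' p' i₀) := by
  refine ⟨3, 3, valuation 1, valuation 8, maxPrice, 0, 1, maxPrice_injective,
    fun _ => ⟨rfl, rfl⟩, fun _ _ h => valuation_eq_of_ne 8 1 h, ⟨_, _, Honest.isBidderOptimal⟩,
    ⟨_, _, Misreport.isBidderOptimal⟩, fun μ p μ' p' h h' => ?_⟩
  have hs' : IsStable 8 μ' p' := h'.1
  rw [h.1.1.bidderU_eq_payoff rfl, bidderU_eq_payoff rfl hs'.1.price_dummy (hs'.1.price_lt_max 0)]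
  exact_mod_cast (Honest.payoff_zero_nonpos h.1).trans_lt
    (zero_lt_one.trans_le (Misreport.one_le_honest_payoff h'))
end
end
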